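/- arXiv:2312.11077 — 2 statements merged into one kernel-verified Lean document; each statement's English description precedes it below -/
import Mathlib

section
/- Let (R, 𝔪) be a two-dimensional regular local ring with infinite residue field and let r ≥ 2. Then 𝔪^r is not the ideal of maximal minors I(M) of any indecomposable integrally closed R-module M of rank r. More precisely, if M is a finitely generated torsion-free integrally closed R-module of rank r with no free direct summand and I(M) = 𝔪^r, then M = 𝔪F, i.e. M is isomorphic to the direct sum of r copies of 𝔪, and hence is decomposable. -/
open IsLocalRing

section Defs

variable {R : Type*} [CommRing R]

/-- `R` is a two-dimensional regular local ring: Noetherian local of Krull dimension 2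
whose maximal ideal is generated by two elements. -/
def IsTwoDimRegularLocal (R : Type*) [CommRing R] [IsLocalRing R] : Prop :=
  IsNoetherianRing R ∧ ringKrullDim R = 2 ∧
    ∃ x y : R, maximalIdeal R = Ideal.span {x, y}

/-- `z` lies in the integral closure of the ideal `I`, i.e. it satisfies an equation
`z ^ n + c 1 * z ^ (n-1) + ⋯ + c n = 0` with `c i ∈ I ^ i`. -/
def MemIntClosure (I : Ideal R) (z : R) : Prop :=
  ∃ n : ℕ, 0 < n ∧ ∃ c : ℕ → R, (∀ i ∈ Finset.Icc 1 n, c i ∈ I ^ i) ∧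
    z ^ n + ∑ i ∈ Finset.Icc 1 n, c i * z ^ (n - i) = 0

/-- The ideal `I` is integrally closed. -/
def IdealIntClosed (I : Ideal R) : Prop := ∀ z, MemIntClosure I z → z ∈ I

/-- `I` is `𝔪`-primary. -/
def IsMPrimary [IsLocalRing R] (I : Ideal R) : Prop := I.radical = maximalIdeal R

/-- `ord I = n` : `n` is the largest power of the maximal ideal containing `I`. -/
def ordEQ [IsLocalRing R] (I : Ideal R) (n : ℕ) : Prop :=
  I ≤ maximalIdeal R ^ n ∧ ¬ I ≤ maximalIdeal R ^ (n + 1)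

/-- Determinant of the square matrix with columns `w 0, …, w (r-1)`. -/
def colDet {r : ℕ} (w : Fin r → Fin r → R) : R :=
  Matrix.det (Matrix.of fun i j => w j i)

/-- The ideal of maximal minors `I(M)` of a submodule `M ⊆ R^r`:  it is generated by all
determinants of `r × r` matrices whose columns lie in `M`. -/
def maxMinors {r : ℕ} (M : Submodule R (Fin r → R)) : Ideal R :=
  Ideal.span { d | ∃ w : Fin r → Fin r → R, (∀ j, w j ∈ M) ∧ d = colDet w }

/-- The ideal `I_k(M)` of `k × k` minors of a matrix whose columns generate `M ⊆ R^r`. -/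
def minorsIdeal (k : ℕ) {r : ℕ} (M : Submodule R (Fin r → R)) : Ideal R :=
  Ideal.span { d | ∃ (w : Fin k → Fin r → R) (ρ : Fin k → Fin r),
    Function.Injective ρ ∧ (∀ j, w j ∈ M) ∧
    d = Matrix.det (Matrix.of fun i j : Fin k => w j (ρ i)) }

/-- `v ∈ R^r` is integral over the submodule `M ⊆ R^r` : the determinant of every square
matrix with one column `v` and the remaining columns in `M` is integral over `I(M)`. -/
def IntegralOverMod {r : ℕ} (M : Submodule R (Fin r → R)) (v : Fin r → R) : Prop :=
  ∀ (w : Fin r → Fin r → R) (j₀ : Fin r), w j₀ = v → (∀ j, j ≠ j₀ → w j ∈ M) →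
    MemIntClosure (maxMinors M) (colDet w)

/-- The submodule `M ⊆ R^r` is integrally closed. -/
def ModIntClosed {r : ℕ} (M : Submodule R (Fin r → R)) : Prop :=
  ∀ v, IntegralOverMod M v → v ∈ M

/-- The length of an `R`-module, as the Krull dimension of its submodule lattice. -/
noncomputable def modLength (R : Type*) (M : Type*) [CommRing R] [AddCommGroup M]
    [Module R M] : WithBot ℕ∞ :=
  Order.krullDim (Submodule R M)

/-- `M ⊆ R^r` has finite colength; equivalently, `M` is a finitely generated torsion-free
module of rank `r` with double dual `M** = R^r`. -/
def FinColength {r : ℕ} (M : Submodule R (Fin r → R)) : Prop :=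
  IsFiniteLength R ((Fin r → R) ⧸ M)

/-- `M` has a nonzero free direct summand. -/
def HasFreeSummand {r : ℕ} (M : Submodule R (Fin r → R)) : Prop :=
  ∃ N P : Submodule R (Fin r → R), N ⊔ P = M ∧ N ⊓ P = ⊥ ∧ N ≠ ⊥ ∧ Module.Free R ↥N

/-- `M` is a direct sum of two nonzero submodules. -/
def DecomposableSub {r : ℕ} (M : Submodule R (Fin r → R)) : Prop :=
  ∃ N P : Submodule R (Fin r → R), N ⊔ P = M ∧ N ⊓ P = ⊥ ∧ N ≠ ⊥ ∧ P ≠ ⊥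

/-- `M` is nonzero and not a direct sum of two nonzero submodules. -/
def IndecomposableSub {r : ℕ} (M : Submodule R (Fin r → R)) : Prop :=
  M ≠ ⊥ ∧ ¬ DecomposableSub M

/-- `a` is a minimal generating set of the ideal `I`. -/
def MinGens {m : ℕ} (I : Ideal R) (a : Fin m → R) : Prop :=
  Ideal.span (Set.range a) = I ∧ ∀ j : Fin m, Ideal.span (a '' {j}ᶜ) ≠ I

/-- `a = c 0 * x^(r-1) + c 1 * x^(r-2) * y + ⋯ + c (r-1) * y^(r-1)`. -/
def Expresses (r : ℕ) (x y : R) (c : Fin r → R) (a : R) : Prop :=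
  a = ∑ i : Fin r, c i * x ^ (r - 1 - (i : ℕ)) * y ^ (i : ℕ)

/-- The `k`-th Koszul relation column between `x^(r-1), …, y^(r-1)`:
`y` in position `k` and `-x` in position `k+1`. -/
def stdRelCol (r : ℕ) (x y : R) (k : ℕ) : Fin r → R :=
  fun i => if (i : ℕ) = k then y else if (i : ℕ) = k + 1 then -x else 0

/-- The module generated by the coefficient columns `C j` together with the `r - 1`
Koszul relation columns between `x^(r-1), …, y^(r-1)`. -/
def MrSpan (r : ℕ) (x y : R) {m : ℕ} (C : Fin m → Fin r → R) :
    Submodule R (Fin r → R) :=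
  Submodule.span R (Set.range C ∪ { v | ∃ k, k < r - 1 ∧ v = stdRelCol r x y k })

/-- The data `(x, y, a, C)` presents the module `M_r(I)` : `𝔪 = (x,y)`, `a` is a minimal
generating set of `I` and column `C j` expresses `a j` in terms of `x^(r-1), …, y^(r-1)`. -/
def IsMrPresentation [IsLocalRing R] (r : ℕ) (I : Ideal R) {m : ℕ} (x y : R)
    (a : Fin m → R) (C : Fin m → Fin r → R) : Prop :=
  maximalIdeal R = Ideal.span {x, y} ∧ MinGens I a ∧ ∀ j, Expresses r x y (C j) (a j)

/-- `N` is a reduction of `M` : `N ≤ M` and every element of `M` is integral over `N`. -/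
def IsReductionMod {r : ℕ} (N M : Submodule R (Fin r → R)) : Prop :=
  N ≤ M ∧ ∀ v ∈ M, IntegralOverMod N v

/-- `N` is a minimal reduction of `M`. -/
def IsMinimalReductionMod {r : ℕ} (N M : Submodule R (Fin r → R)) : Prop :=
  IsReductionMod N M ∧ ∀ N' ≤ N, IsReductionMod N' M → N' = N

/-- The `j`-th signed maximal minor of an `r × (r+1)` matrix. -/
def signedMinor {r : ℕ} (A : Matrix (Fin r) (Fin (r + 1)) R) (j : Fin (r + 1)) : R :=
  (-1 : R) ^ (j : ℕ) * (A.submatrix id j.succAbove).det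

/-- `M ⊆ R^r` is extremal: integrally closed, without free direct summands, with
`λ(R/I(M)) = λ(R^r/M) + r(r-1)/2`. -/
def IsExtremal {r : ℕ} (M : Submodule R (Fin r → R)) : Prop :=
  FinColength M ∧ ModIntClosed M ∧ ¬ HasFreeSummand M ∧
    modLength R (R ⧸ maxMinors M) =
      modLength R ((Fin r → R) ⧸ M) + ((r * (r - 1) / 2 : ℕ) : WithBot ℕ∞)

/-- `a ∈ J`, `b ∈ K` is a joint reduction of the pair `(J, K)`. -/
def IsJointReduction (J K : Ideal R) (a b : R) : Prop :=
  a ∈ J ∧ b ∈ K ∧ ∃ n : ℕ,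
    (Ideal.span {a} * K + Ideal.span {b} * J) * (J * K) ^ n = (J * K) ^ (n + 1)

/-- `S` is the matrix `Sym^k(Q)` for `Q = [[a, c], [b, d]]` : with `X = aU + bV`,
`Y = cU + dV`, the `j`-th column of `S` records the coefficients of
`X^(k-j) Y^j` in terms of `U^k, U^(k-1)V, …, V^k`. -/
def IsSymOf (k : ℕ) (a b c d : R) (S : Matrix (Fin (k + 1)) (Fin (k + 1)) R) : Prop :=
  ∀ j : Fin (k + 1),
    ((MvPolynomial.C a * MvPolynomial.X 0 + MvPolynomial.C b * MvPolynomial.X 1) ^ (k - (j : ℕ)) *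
        (MvPolynomial.C c * MvPolynomial.X 0 + MvPolynomial.C d * MvPolynomial.X 1) ^ (j : ℕ)
      : MvPolynomial (Fin 2) R)
    = ∑ i : Fin (k + 1), MvPolynomial.C (S i j) *
        MvPolynomial.X 0 ^ (k - (i : ℕ)) * MvPolynomial.X 1 ^ (i : ℕ)

/-- The `r × s` bidiagonal matrix with `y` on the diagonal and `-x` directly below it. -/
def bidiag (r s : ℕ) (x y : R) : Matrix (Fin r) (Fin s) R :=
  Matrix.of fun i j =>
    if (i : ℕ) = (j : ℕ) then y else if (i : ℕ) = (j : ℕ) + 1 then -x else 0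

end Defs

section Aux

variable {R : Type*} [CommRing R]

lemma memIntClosure_of_mem {I : Ideal R} {z : R} (hz : z ∈ I) : MemIntClosure I z := by
  refine ⟨1, one_pos, fun i => if i = 1 then -z else 0, ?_, ?_⟩
  · intro i hi
    simp only [Finset.mem_Icc] at hi
    have : i = 1 := le_antisymm hi.2 hi.1
    subst this
    simpa using I.neg_mem hz
  · simp

lemma prod_mem_pow {ι : Type*} (I : Ideal R) (s : Finset ι) (f : ι → R)
    (h : ∀ i ∈ s, f i ∈ I) : ∏ i ∈ s, f i ∈ I ^ s.card := by
  classical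
  induction s using Finset.cons_induction with
  | empty => simp
  | cons a s ha ih =>
    rw [Finset.prod_cons, Finset.card_cons, pow_succ']
    exact Ideal.mul_mem_mul (h a (Finset.mem_cons_self a s))
      (ih fun i hi => h i (Finset.mem_cons_of_mem hi))

lemma det_mem_pow {r : ℕ} (I : Ideal R) (A : Matrix (Fin r) (Fin r) R)
    (h : ∀ i j, A i j ∈ I) : A.det ∈ I ^ r := by
  rw [Matrix.det_apply']
  refine Ideal.sum_mem _ fun σ _ => Ideal.mul_mem_left _ _ ?_
  have := prod_mem_pow I Finset.univ (fun i => A (σ i) i) (fun i _ => h _ _)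
  simpa using this

lemma smul_top_eq_pi {r : ℕ} (I : Ideal R) :
    I • (⊤ : Submodule R (Fin r → R)) = Submodule.pi Set.univ (fun _ => I) := by
  apply le_antisymm
  · rw [Submodule.smul_le]
    intro c hc v _
    rw [Submodule.mem_pi]
    intro i _
    exact I.mul_mem_right _ hc
  · intro v hv
    rw [Submodule.mem_pi] at hv
    have hv' : v = ∑ i, Pi.single i (v i) := (Finset.univ_sum_single v).symm
    rw [hv']
    refine Submodule.sum_mem _ fun i _ => ?_
    have : Pi.single i (v i) = (v i) • (Pi.single i (1 : R) : Fin r → R) := by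
      funext j
      by_cases hj : j = i
      · subst hj; simp
      · simp [Pi.single_eq_of_ne hj]
    rw [this]
    exact Submodule.smul_mem_smul (hv i trivial) Submodule.mem_top

lemma summand_of_unit_coord [Nontrivial R] {r : ℕ} {M : Submodule R (Fin r → R)}
    {v : Fin r → R} (hv : v ∈ M) {i : Fin r} (hu : IsUnit (v i)) :
    ∃ P, (Submodule.span R {v}) ⊔ P = M ∧ (Submodule.span R {v}) ⊓ P = ⊥ ∧
      Submodule.span R {v} ≠ ⊥ ∧ Module.Free R ↥(Submodule.span R {v}) := by
  have hvi : (hu.unit : R) = v i := hu.unit_spec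
  have hmulinv : v i * (↑hu.unit⁻¹ : R) = 1 := hu.mul_val_inv
  have hinvmul : (↑hu.unit⁻¹ : R) * v i = 1 := hu.val_inv_mul
  have hcancel : ∀ a : R, a * v i = 0 → a = 0 := by
    intro a ha
    have h2 : a * (v i * (↑hu.unit⁻¹ : R)) = 0 := by
      rw [← mul_assoc, ha, zero_mul]
    rwa [hmulinv, mul_one] at h2
  refine ⟨M ⊓ LinearMap.ker (LinearMap.proj i), ?_, ?_, ?_, ?_⟩
  · apply le_antisymm
    · exact sup_le ((Submodule.span_le).2 (Set.singleton_subset_iff.2 hv)) inf_le_left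
    · intro u hu'
      set c : R := u i * (↑hu.unit⁻¹ : R) with hc
      have hcv : c * v i = u i := by
        rw [hc, mul_assoc, hinvmul, mul_one]
      rw [Submodule.mem_sup]
      refine ⟨c • v, Submodule.smul_mem _ _ (Submodule.mem_span_singleton_self v),
        u - c • v, ?_, by abel⟩
      refine Submodule.mem_inf.2 ⟨Submodule.sub_mem _ hu' (Submodule.smul_mem _ _ hv), ?_⟩
      rw [LinearMap.mem_ker]
      show u i - c * v i = 0
      rw [hcv, sub_self]
  · rw [eq_bot_iff]
    intro u hmem
    obtain ⟨hmem1, hmem2⟩ := Submodule.mem_inf.1 hmem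
    obtain ⟨hmemM, hker⟩ := Submodule.mem_inf.1 hmem2
    obtain ⟨a, ha⟩ := Submodule.mem_span_singleton.1 hmem1
    rw [LinearMap.mem_ker] at hker
    have hui : u i = 0 := hker
    have h0 : a * v i = 0 := by
      have : (a • v) i = u i := by rw [ha]
      simpa [hui] using this
    have ha0 := hcancel a h0
    rw [Submodule.mem_bot, ← ha, ha0, zero_smul]
  · rw [Ne, Submodule.span_singleton_eq_bot]
    intro h0
    rw [h0] at hu
    have h1 : IsUnit (0 : R) := by simpa using hu
    exact not_isUnit_zero h1
  · have hinj : Function.Injective (LinearMap.toSpanSingleton R (Fin r → R) v) := by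
      rw [← LinearMap.ker_eq_bot, eq_bot_iff]
      intro a ha
      rw [LinearMap.mem_ker] at ha
      have h0 : a * v i = 0 := by
        have : (a • v) i = 0 := by rw [show a • v = 0 from ha]; rfl
        simpa using this
      simpa using hcancel a h0
    have e := LinearEquiv.ofInjective _ hinj
    have hrange := (LinearMap.span_singleton_eq_range R (Fin r → R) v).symm
    exact Module.Free.of_equiv (e.trans (LinearEquiv.ofEq _ _ hrange))

lemma pow_maximalIdeal_ne_bot [IsLocalRing R] (hdim : ringKrullDim R = 2) {n : ℕ}
    (hn : n ≠ 0) : maximalIdeal R ^ n ≠ ⊥ := by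
  intro h
  have huniq : ∀ p : PrimeSpectrum R, p.asIdeal = maximalIdeal R := by
    intro p
    have h1 : maximalIdeal R ^ n ≤ p.asIdeal := h ▸ bot_le
    have h2 : maximalIdeal R ≤ p.asIdeal := p.isPrime.le_of_pow_le h1
    exact ((maximalIdeal.isMaximal R).eq_of_le p.isPrime.ne_top h2).symm
  have : Subsingleton (PrimeSpectrum R) :=
    ⟨fun p q => PrimeSpectrum.ext (by rw [huniq p, huniq q])⟩
  have hle : ringKrullDim R ≤ 0 := Order.krullDim_nonpos_of_subsingleton
  rw [hdim] at hle
  norm_num at hle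

lemma maximalIdeal_ne_bot [IsLocalRing R] (hdim : ringKrullDim R = 2) :
    maximalIdeal R ≠ ⊥ := by
  intro h
  exact pow_maximalIdeal_ne_bot hdim one_ne_zero (by rw [h, pow_one])

/-- `𝔪 • ⊤` is decomposable. -/
lemma decomposable_smul_top [IsLocalRing R] (hdim : ringKrullDim R = 2) {r : ℕ}
    (hr : 2 ≤ r) :
    DecomposableSub (maximalIdeal R • (⊤ : Submodule R (Fin r → R))) := by
  classical
  obtain ⟨z, hz, hz0⟩ := Submodule.exists_mem_ne_zero_of_ne_bot (maximalIdeal_ne_bot hdim)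
  have h0r : 0 < r := lt_of_lt_of_le two_pos hr
  have h1r : 1 < r := lt_of_lt_of_le one_lt_two hr
  set i0 : Fin r := ⟨0, h0r⟩
  set i1 : Fin r := ⟨1, h1r⟩
  have hne : i1 ≠ i0 := by
    intro h
    simpa [i0, i1] using congrArg Fin.val h
  set N : Submodule R (Fin r → R) :=
    Submodule.pi Set.univ (fun j => if j = i0 then maximalIdeal R else ⊥) with hN
  set P : Submodule R (Fin r → R) :=
    Submodule.pi Set.univ (fun j => if j = i0 then ⊥ else maximalIdeal R) with hP
  rw [smul_top_eq_pi]
  refine ⟨N, P, ?_, ?_, ?_, ?_⟩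
  · apply le_antisymm
    · have hNle : N ≤ Submodule.pi Set.univ (fun _ => maximalIdeal R) := by
        intro u hu
        rw [Submodule.mem_pi] at hu ⊢
        intro j hj
        have h1 := hu j hj
        by_cases h : j = i0
        · rwa [if_pos h] at h1
        · rw [if_neg h] at h1
          rw [(Submodule.mem_bot R).1 h1]
          exact Submodule.zero_mem _
      have hPle : P ≤ Submodule.pi Set.univ (fun _ => maximalIdeal R) := by
        intro u hu
        rw [Submodule.mem_pi] at hu ⊢
        intro j hj
        have h1 := hu j hj
        by_cases h : j = i0
        · rw [if_pos h] at h1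
          rw [(Submodule.mem_bot R).1 h1]
          exact Submodule.zero_mem _
        · rwa [if_neg h] at h1
      exact sup_le hNle hPle
    · intro u hu
      rw [Submodule.mem_pi] at hu
      rw [Submodule.mem_sup]
      refine ⟨Pi.single i0 (u i0), ?_, u - Pi.single i0 (u i0), ?_, by abel⟩
      · rw [Submodule.mem_pi]
        intro j _
        by_cases h : j = i0
        · rw [if_pos h, h, Pi.single_eq_same]
          exact hu i0 trivial
        · rw [if_neg h, Pi.single_eq_of_ne h]
          exact Submodule.zero_mem _
      · rw [Submodule.mem_pi]
        intro j _
        by_cases h : j = i0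
        · rw [if_pos h, h]
          simp
        · rw [if_neg h]
          simpa [Pi.single_eq_of_ne h] using hu j trivial
  · rw [eq_bot_iff]
    intro u hu
    rw [Submodule.mem_bot]
    funext j
    obtain ⟨hu1, hu2⟩ := Submodule.mem_inf.1 hu
    rw [Submodule.mem_pi] at hu1 hu2
    have h1 := hu1 j trivial
    have h2 := hu2 j trivial
    by_cases h : j = i0
    · simpa [h] using h2
    · simpa [h] using h1
  · intro h
    have : Pi.single i0 z ∈ N := by
      rw [Submodule.mem_pi]
      intro j _
      by_cases hj : j = i0
      · rw [if_pos hj, hj, Pi.single_eq_same]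
        exact hz
      · rw [if_neg hj, Pi.single_eq_of_ne hj]
        exact Submodule.zero_mem _
    rw [h, Submodule.mem_bot] at this
    exact hz0 (by simpa using congrFun this i0)
  · intro h
    have : Pi.single i1 z ∈ P := by
      rw [Submodule.mem_pi]
      intro j _
      by_cases hj : j = i0
      · rw [if_pos hj, hj, Pi.single_eq_of_ne (Ne.symm hne)]
        exact Submodule.zero_mem _
      · rw [if_neg hj]
        by_cases hj1 : j = i1
        · rw [hj1, Pi.single_eq_same]
          exact hz
        · rw [Pi.single_eq_of_ne hj1]
          exact Submodule.zero_mem _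
    rw [h, Submodule.mem_bot] at this
    exact hz0 (by simpa using congrFun this i1)

end Aux

/-- `𝔪^r` is not `I(M)` for any indecomposable integrally closed module `M` of
rank `r ≥ 2`; more precisely an integrally closed `M` of rank `r` with no free direct summand
and `I(M) = 𝔪^r` equals `𝔪F`, hence is decomposable. -/
theorem statement0 (R : Type*) [CommRing R] [IsLocalRing R]
    (hreg : IsTwoDimRegularLocal R) [Infinite (IsLocalRing.ResidueField R)]
    (r : ℕ) (hr : 2 ≤ r) :
    (∀ M : Submodule R (Fin r → R), FinColength M → ModIntClosed M →
      IndecomposableSub M → maxMinors M ≠ maximalIdeal R ^ r) ∧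
    (∀ M : Submodule R (Fin r → R), FinColength M → ModIntClosed M →
      ¬ HasFreeSummand M → maxMinors M = maximalIdeal R ^ r →
      M = maximalIdeal R • (⊤ : Submodule R (Fin r → R)) ∧ DecomposableSub M) := by
  classical
  obtain ⟨hnoeth, hdim, x, y, hxy⟩ := hreg
  have hr0 : r ≠ 0 := by omega
  -- If M is contained in 𝔪F, integrally closed and I(M) = 𝔪^r, then M = 𝔪F.
  have key2 : ∀ M : Submodule R (Fin r → R), ModIntClosed M →
      maxMinors M = maximalIdeal R ^ r →
      M ≤ Submodule.pi Set.univ (fun _ => maximalIdeal R) →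
      M = maximalIdeal R • (⊤ : Submodule R (Fin r → R)) := by
    intro M hic hmm hle
    rw [smul_top_eq_pi]
    apply le_antisymm hle
    intro v hv
    apply hic
    intro w j₀ hj₀ hw
    apply memIntClosure_of_mem
    rw [hmm]
    show Matrix.det (Matrix.of fun i j => w j i) ∈ maximalIdeal R ^ r
    apply det_mem_pow
    intro i j
    show w j i ∈ maximalIdeal R
    by_cases h : j = j₀
    · rw [h, hj₀]
      exact Submodule.mem_pi.1 hv i (Set.mem_univ i)
    · exact Submodule.mem_pi.1 (hle (hw j h)) i (Set.mem_univ i)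
  have main2 : ∀ M : Submodule R (Fin r → R), FinColength M → ModIntClosed M →
      ¬ HasFreeSummand M → maxMinors M = maximalIdeal R ^ r →
      M = maximalIdeal R • (⊤ : Submodule R (Fin r → R)) ∧ DecomposableSub M := by
    intro M _ hic hfree hmm
    have hle : M ≤ Submodule.pi Set.univ (fun _ => maximalIdeal R) := by
      intro u hu
      rw [Submodule.mem_pi]
      intro i _
      by_contra hi
      have hunit : IsUnit (u i) := IsLocalRing.notMem_maximalIdeal.1 hi
      obtain ⟨P, h1, h2, h3, h4⟩ := summand_of_unit_coord hu hunit
      exact hfree ⟨_, P, h1, h2, h3, h4⟩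
    have hM := key2 M hic hmm hle
    refine ⟨hM, ?_⟩
    rw [hM]
    exact decomposable_smul_top hdim hr
  refine ⟨?_, main2⟩
  intro M hfc hic hind hmm
  by_cases hle : M ≤ Submodule.pi Set.univ (fun _ => maximalIdeal R)
  · have hM := key2 M hic hmm hle
    refine hind.2 ?_
    rw [hM]
    exact decomposable_smul_top hdim hr
  · rw [SetLike.not_le_iff_exists] at hle
    obtain ⟨u, huM, hupi⟩ := hle
    have hex : ∃ i, u i ∉ maximalIdeal R := by
      by_contra h
      push_neg at h
      exact hupi (Submodule.mem_pi.2 fun i _ => h i)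
    obtain ⟨i, hi⟩ := hex
    have hunit : IsUnit (u i) := IsLocalRing.notMem_maximalIdeal.1 hi
    obtain ⟨P, h1, h2, h3, _⟩ := summand_of_unit_coord huM hunit
    have hP : P = ⊥ := by
      by_contra hP
      exact hind.2 ⟨_, P, h1, h2, h3, hP⟩
    have hM : M = Submodule.span R {u} := by rw [← h1, hP, sup_bot_eq]
    have h0r : 0 < r := by omega
    have h1r : 1 < r := by omega
    have hne01 : (⟨0, h0r⟩ : Fin r) ≠ ⟨1, h1r⟩ := by
      intro h
      simpa using congrArg Fin.val h
    have hbot : maxMinors M ≤ ⊥ := by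
      rw [maxMinors, Ideal.span_le]
      rintro d ⟨w, hw, rfl⟩
      have hc : ∀ j, ∃ c : R, c • u = w j := fun j =>
        Submodule.mem_span_singleton.1 (hM ▸ hw j)
      choose c hc using hc
      have hwji : ∀ i j, w j i = c j * u i := by
        intro i j
        rw [← hc j]
        rfl
      have hcol : colDet w = (∏ j, c j) * (Matrix.of fun (i _ : Fin r) => u i).det := by
        show Matrix.det (Matrix.of fun i j => w j i) = _
        rw [show (Matrix.of fun i j => w j i)
            = Matrix.of fun i j => c j * (Matrix.of fun (i _ : Fin r) => u i) i j from by
          ext i j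
          exact hwji i j]
        exact Matrix.det_mul_row c _
      have hdetB : (Matrix.of fun (i _ : Fin r) => u i).det = 0 :=
        Matrix.det_zero_of_column_eq hne01 (fun k => rfl)
      simp only [SetLike.mem_coe, Ideal.mem_bot]
      rw [hcol, hdetB, mul_zero]
    have : maximalIdeal R ^ r = ⊥ := by
      rw [← hmm]
      exact le_bot_iff.1 hbot
    exact pow_maximalIdeal_ne_bot hdim hr0 this
end

section
/- Let (R, 𝔪) be a two-dimensional regular local ring, Q ∈ GL_2(R) a 2×2 invertible matrix with entries a, b (first column) and c, d (second column), and suppose 𝔪 = (u, v) = (x, y) with [x y] = [u v]·Q. Let B_{x,y} denote the r × (r−1) bidiagonal matrix with y on the diagonal and −x directly below the diagonal, and similarly B_{u,v}. Then: (1) if a column vector (a_{1,j}, …, a_{r,j})^T expresses an element a_j ∈ 𝔪^{r-1} in terms of x^{r-1}, x^{r-2}y, …, y^{r-1}, then the column Sym^{r-1}(Q)·(a_{1,j}, …, a_{r,j})^T expresses a_j in terms of u^{r-1}, u^{r-2}v, …, v^{r-1}; (2) Sym^{r-1}(Q)·B_{x,y} = det(Q)·B_{u,v}·Sym^{r-2}(Q).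 -/
open IsLocalRing

/-!
Everything is read off the row of monomials `m_k(U, V) = [U^k, U^(k-1) V, …, V^k]`.
By definition `m_k(U, V) · Sym^k(Q) = m_k(X, Y)` with `X = aU + bV`, `Y = cU + dV`, and
`m_(k+1)(P, P') · B_{x,y} = (y P - x P') · m_k(P, P')` for any `P, P'`. Part (1) is the first
identity evaluated at `(U, V) = (u, v)`. For part (2), multiplying both sides by `m_(k+1)(U, V)`
gives `(y X - x Y) · m_k(X, Y)` and `det Q · (v U - u V) · m_k(X, Y)`, which agree because
`[x y] = [u v] Q`; a coefficient matrix is determined by its product with `m_(k+1)(U, V)`.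
-/

open MvPolynomial Matrix

section monomialRow

variable {A : Type*} [CommRing A]

def monomialRow (k : ℕ) (P Q : A) : Fin (k + 1) → A :=
  fun i => P ^ (k - (i : ℕ)) * Q ^ (i : ℕ)

lemma map_monomialRow {B : Type*} [CommRing B] (f : A →+* B) (k : ℕ) (P Q : A)
    (i : Fin (k + 1)) : f (monomialRow k P Q i) = monomialRow k (f P) (f Q) i := by
  simp [monomialRow]

lemma bidiag_map {B : Type*} [CommRing B] (f : A →+* B) (r s : ℕ) (x y : A) :
    (bidiag r s x y).map f = bidiag r s (f x) (f y) := by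
  ext i j
  simp only [bidiag, map_apply, of_apply]
  split_ifs <;> simp

lemma monomialRow_vecMul_bidiag (k : ℕ) (P Q x y : A) :
    monomialRow (k + 1) P Q ᵥ* bidiag (k + 2) (k + 1) x y = (y * P - x * Q) • monomialRow k P Q := by
  ext j
  have hj : (j : ℕ) ≤ k := Nat.lt_succ_iff.mp j.isLt
  have hcol : ∀ i : Fin (k + 2), bidiag (k + 2) (k + 1) x y i j =
      (if i = j.castSucc then y else 0) + (if i = j.succ then -x else 0) := by
    intro i
    simp only [bidiag, of_apply, Fin.ext_iff, Fin.val_castSucc, Fin.val_succ]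
    split_ifs <;> simp_all
  simp only [vecMul, dotProduct, hcol, mul_add, mul_ite, mul_zero, Finset.sum_add_distrib,
    Finset.sum_ite_eq', Finset.mem_univ, if_true, monomialRow, Fin.val_castSucc, Fin.val_succ,
    Pi.smul_apply, smul_eq_mul]
  rw [show k + 1 - (j : ℕ) = k - j + 1 by omega, show k + 1 - ((j : ℕ) + 1) = k - j by omega]
  ring

end monomialRow

section coefficients

variable {R : Type*} [CommRing R]

lemma coeff_monomialRow_dotProduct (k : ℕ) (w : Fin (k + 1) → R) (i : Fin (k + 1)) :
    coeff (Finsupp.single 0 (k - (i : ℕ)) + Finsupp.single 1 (i : ℕ))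
      (monomialRow k (X 0 : MvPolynomial (Fin 2) R) (X 1) ⬝ᵥ (C ∘ w)) = w i := by
  rw [dotProduct_comm]
  simp only [dotProduct, monomialRow, Function.comp_apply, coeff_sum, coeff_C_mul,
    X_pow_eq_monomial, monomial_mul, one_mul, coeff_monomial]
  rw [Finset.sum_eq_single i (fun l _ hl => ?_) (by simp), if_pos rfl, mul_one]
  rw [if_neg, mul_zero]
  intro h
  have := DFunLike.congr_fun h 1
  simp only [Finsupp.add_apply, Finsupp.single_apply] at this
  exact hl (Fin.ext (by simpa using this))

lemma eq_of_monomialRow_X_vecMul_map_C_eq {n : Type*} (k : ℕ)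
    {M N : Matrix (Fin (k + 1)) n R}
    (h : monomialRow k (X 0 : MvPolynomial (Fin 2) R) (X 1) ᵥ* M.map C =
      monomialRow k (X 0) (X 1) ᵥ* N.map C) : M = N := by
  ext i j
  have hj := congrArg (coeff (Finsupp.single 0 (k - (i : ℕ)) + Finsupp.single 1 (i : ℕ)))
    (congrFun h j)
  change coeff _ (_ ⬝ᵥ (C ∘ fun i => M i j)) = coeff _ (_ ⬝ᵥ (C ∘ fun i => N i j)) at hj
  rwa [coeff_monomialRow_dotProduct, coeff_monomialRow_dotProduct] at hj

end coefficients

section symmetricPower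

variable {R : Type*} [CommRing R] {k : ℕ} {a b c d : R}

lemma IsSymOf.monomialRow_X_vecMul {S : Matrix (Fin (k + 1)) (Fin (k + 1)) R}
    (hS : IsSymOf k a b c d S) :
    monomialRow k (X 0 : MvPolynomial (Fin 2) R) (X 1) ᵥ* S.map C =
      monomialRow k (C a * X 0 + C b * X 1) (C c * X 0 + C d * X 1) := by
  funext j
  rw [monomialRow, hS j]
  simp only [vecMul, dotProduct, monomialRow, map_apply]
  exact Finset.sum_congr rfl fun i _ => by ring

lemma IsSymOf.monomialRow_vecMul {S : Matrix (Fin (k + 1)) (Fin (k + 1)) R}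
    (hS : IsSymOf k a b c d S) (u v : R) :
    monomialRow k u v ᵥ* S = monomialRow k (a * u + b * v) (c * u + d * v) := by
  funext j
  have h := congrArg (eval ![u, v]) (congrFun hS.monomialRow_X_vecMul j)
  simpa [RingHom.map_vecMul, Function.comp_def, map_monomialRow] using h

lemma expresses_iff_eq_dotProduct (k : ℕ) (x y : R) (w : Fin (k + 1) → R) (z : R) :
    Expresses (k + 1) x y w z ↔ z = monomialRow k x y ⬝ᵥ w := by
  simp only [Expresses, dotProduct, monomialRow, Nat.add_sub_cancel]
  exact Eq.congr_right (Finset.sum_congr rfl fun i _ => by ring)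

lemma IsSymOf.expresses_mulVec {S : Matrix (Fin (k + 1)) (Fin (k + 1)) R}
    (hS : IsSymOf k a b c d S) {u v x y : R} (hx : x = a * u + b * v) (hy : y = c * u + d * v)
    {w : Fin (k + 1) → R} {z : R} (h : Expresses (k + 1) x y w z) :
    Expresses (k + 1) u v (S *ᵥ w) z := by
  rw [expresses_iff_eq_dotProduct] at h ⊢
  rw [h, dotProduct_mulVec, hS.monomialRow_vecMul, hx, hy]

lemma IsSymOf.mul_bidiag {S₁ : Matrix (Fin (k + 2)) (Fin (k + 2)) R}
    {S₂ : Matrix (Fin (k + 1)) (Fin (k + 1)) R}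
    (hS₁ : IsSymOf (k + 1) a b c d S₁) (hS₂ : IsSymOf k a b c d S₂)
    {u v x y : R} (hx : x = a * u + b * v) (hy : y = c * u + d * v) :
    S₁ * bidiag (k + 2) (k + 1) x y = (a * d - b * c) • (bidiag (k + 2) (k + 1) u v * S₂) := by
  apply eq_of_monomialRow_X_vecMul_map_C_eq (k + 1)
  set P : MvPolynomial (Fin 2) R := C a * X 0 + C b * X 1
  set Q : MvPolynomial (Fin 2) R := C c * X 0 + C d * X 1
  have hdet : C y * P - C x * Q = C (a * d - b * c) * (C v * X 0 - C u * X 1) := by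
    simp only [P, Q, hx, hy, map_add, map_mul, map_sub]
    ring
  calc monomialRow (k + 1) (X 0) (X 1) ᵥ* (S₁ * bidiag (k + 2) (k + 1) x y).map C
      = monomialRow (k + 1) P Q ᵥ* bidiag (k + 2) (k + 1) (C x) (C y) := by
        rw [Matrix.map_mul, ← vecMul_vecMul, hS₁.monomialRow_X_vecMul, bidiag_map]
    _ = ((C (a * d - b * c) : MvPolynomial (Fin 2) R) • (monomialRow (k + 1) (X 0) (X 1) ᵥ*
          bidiag (k + 2) (k + 1) (C u) (C v))) ᵥ* S₂.map C := by
        rw [monomialRow_vecMul_bidiag, monomialRow_vecMul_bidiag, hdet, ← hS₂.monomialRow_X_vecMul,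
          smul_vecMul, smul_vecMul, mul_smul]
    _ = monomialRow (k + 1) (X 0) (X 1) ᵥ*
          ((a * d - b * c) • (bidiag (k + 2) (k + 1) u v * S₂)).map C := by
        rw [Matrix.map_smulₛₗ C C _ fun _ => by rw [smul_eq_mul, map_mul, smul_eq_mul],
          Matrix.map_mul, bidiag_map, vecMul_smul, smul_vecMul, vecMul_vecMul]

end symmetricPower

theorem statement2_general (R : Type*) [CommRing R]
    (Q : Matrix (Fin 2) (Fin 2) R)
    (u v x y : R)
    (hx : x = Q 0 0 * u + Q 1 0 * v)
    (hy : y = Q 0 1 * u + Q 1 1 * v)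
    (k : ℕ)
    (S₁ : Matrix (Fin (k + 2)) (Fin (k + 2)) R)
    (S₂ : Matrix (Fin (k + 1)) (Fin (k + 1)) R)
    (hS₁ : IsSymOf (k + 1) (Q 0 0) (Q 1 0) (Q 0 1) (Q 1 1) S₁)
    (hS₂ : IsSymOf k (Q 0 0) (Q 1 0) (Q 0 1) (Q 1 1) S₂) :
    (∀ (c : Fin (k + 2) → R) (a : R),
      Expresses (k + 2) x y c a → Expresses (k + 2) u v (S₁.mulVec c) a) ∧
    S₁ * bidiag (k + 2) (k + 1) x y = Q.det • (bidiag (k + 2) (k + 1) u v * S₂) := by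
  refine ⟨fun c a h => hS₁.expresses_mulVec hx hy h, ?_⟩
  rw [hS₁.mul_bidiag hS₂ hx hy, Matrix.det_fin_two, mul_comm (Q 0 1)]

/-- with `[x y] = [u v]·Q` for `Q ∈ GL₂(R)`, (1) applying `Sym^(r-1)(Q)` to a
coefficient column converts an expression in `x^(r-1), …, y^(r-1)` to one in
`u^(r-1), …, v^(r-1)`; (2) `Sym^(r-1)(Q) · B_{x,y} = det(Q) · B_{u,v} · Sym^(r-2)(Q)`.
(Here `r = k + 2`.) -/
theorem statement2 (R : Type*) [CommRing R] [IsLocalRing R]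
    (hreg : IsTwoDimRegularLocal R)
    (Q : Matrix (Fin 2) (Fin 2) R) (hQ : IsUnit Q.det)
    (u v x y : R)
    (hm1 : maximalIdeal R = Ideal.span {u, v})
    (hm2 : maximalIdeal R = Ideal.span {x, y})
    (hx : x = Q 0 0 * u + Q 1 0 * v)
    (hy : y = Q 0 1 * u + Q 1 1 * v)
    (k : ℕ)
    (S₁ : Matrix (Fin (k + 2)) (Fin (k + 2)) R)
    (S₂ : Matrix (Fin (k + 1)) (Fin (k + 1)) R)
    (hS₁ : IsSymOf (k + 1) (Q 0 0) (Q 1 0) (Q 0 1) (Q 1 1) S₁)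
    (hS₂ : IsSymOf k (Q 0 0) (Q 1 0) (Q 0 1) (Q 1 1) S₂) :
    (∀ (c : Fin (k + 2) → R) (a : R),
      Expresses (k + 2) x y c a → Expresses (k + 2) u v (S₁.mulVec c) a) ∧
    S₁ * bidiag (k + 2) (k + 1) x y = Q.det • (bidiag (k + 2) (k + 1) u v * S₂) :=
  statement2_general R Q u v x y hx hy k S₁ S₂ hS₁ hS₂
end
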